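/- The correspondence ν ↦ ν̃ determined by the relation κ-dim(z)·ν̃(z,γ) = dim(z)·ν(z)·γ^{−1} for all (z,γ) ∈ ⊔ₙ 𝔷̃ₙ is a bijection from H₁⁺(κ) onto H₁⁺(μ̃)_{−1}, with inverse given by ν(z) = (κ-dim(z)/dim(z))·ν̃(z,1); moreover this bijection is affine, i.e., it intertwines convex combinations. -/

import Mathlib

open scoped BigOperators Classical ENNReal

universe u

variable {Z : ℕ → Type u}

/-- A path in the branching graph ending at the vertex `z` of level `n`:
it records vertices `z₀,…,zₙ` with `zₙ = z` and `κ(z_{k+1}, z_k) > 0` for all `k`.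
(At level `0` the vertex is forced since `Z 0` is a singleton.) -/
structure BPath (κ : ∀ n, Z (n + 1) → Z n → ℝ) {n : ℕ} (z : Z n) where
  pt : ∀ k : Fin (n + 1), Z k
  last : pt (Fin.last n) = z
  pos : ∀ k : Fin n, 0 < κ k (pt k.succ) (pt k.castSucc)

/-- `dim z`: the number of paths to `z`. -/
noncomputable def bdim (κ : ∀ n, Z (n + 1) → Z n → ℝ) {n : ℕ} (z : Z n) : ℕ :=
  Nat.card (BPath κ z)

/-- The `κ`-dimension `κ-dim(z)`. -/
noncomputable def kdim (κ : ∀ n, Z (n + 1) → Z n → ℝ) {n : ℕ} (z : Z n) : ℝ :=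
  Real.sqrt (∑' p : BPath κ z, ∏ k : Fin n, (κ k (p.pt k.succ) (p.pt k.castSucc))⁻¹)

/-- The weight `ρ(z, z')`. -/
noncomputable def wrho (κ : ∀ n, Z (n + 1) → Z n → ℝ) {n : ℕ} (z : Z (n + 1)) (z' : Z n) : ℝ :=
  kdim κ z * κ n z z' / kdim κ z'

/-- The weight group `Γ(κ)`: the subgroup of `ℝˣ` generated by the positive weights. -/
noncomputable def weightGroup (κ : ∀ n, Z (n + 1) → Z n → ℝ) : Subgroup ℝˣ :=
  Subgroup.closure
    {γ : ℝˣ | ∃ (n : ℕ) (z : Z (n + 1)) (z' : Z n), 0 < κ n z z' ∧ (γ : ℝ) = wrho κ z z'}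

/-- The multiplicity function `m̃` of the weight-extended branching graph. -/
noncomputable def mtilde (κ : ∀ n, Z (n + 1) → Z n → ℝ) {n : ℕ}
    (p : Z (n + 1) × ℝˣ) (p' : Z n × ℝˣ) : ℕ :=
  if 0 < κ n p.1 p'.1 ∧ ((p.2⁻¹ * p'.2 : ℝˣ) : ℝ) = wrho κ p.1 p'.1 then 1 else 0

/-- The standard link `μ̃` of the weight-extended branching graph. -/
noncomputable def mutilde (κ : ∀ n, Z (n + 1) → Z n → ℝ) {n : ℕ}
    (p : Z (n + 1) × ℝˣ) (p' : Z n × ℝˣ) : ℝ :=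
  (mtilde κ p p' : ℝ) * (bdim κ p'.1 : ℝ) / (bdim κ p.1 : ℝ)

/-- `ν ∈ H₁⁺(κ)`: nonnegative, normalized at the root, and `κ`-harmonic
(the defining sums converging). -/
def memH1 (κ : ∀ n, Z (n + 1) → Z n → ℝ) [Unique (Z 0)] (ν : ∀ n, Z n → ℝ) : Prop :=
  (∀ (n : ℕ) (z : Z n), 0 ≤ ν n z) ∧ ν 0 default = 1 ∧
    ∀ (n : ℕ) (z' : Z n), HasSum (fun z : Z (n + 1) => ν (n + 1) z * κ n z z') (ν n z')

/-- `ν̃ ∈ H₁⁺(μ̃)_{−1}`: a nonnegative, normalized, `(−1)`-power scaling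
`μ̃`-harmonic function on the weight-extended branching graph. -/
def memH1T (κ : ∀ n, Z (n + 1) → Z n → ℝ) [Unique (Z 0)]
    (νt : ∀ n, Z n → ↥(weightGroup κ) → ℝ) : Prop :=
  (∀ (n : ℕ) (z : Z n) (γ : ↥(weightGroup κ)), 0 ≤ νt n z γ) ∧
  (∀ (n : ℕ) (z' : Z n) (γ' : ↥(weightGroup κ)),
      HasSum
        (fun p : Z (n + 1) × ↥(weightGroup κ) =>
          νt (n + 1) p.1 p.2 * mutilde κ (p.1, (p.2 : ℝˣ)) (z', (γ' : ℝˣ)))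
        (νt n z' γ')) ∧
  (∀ (n : ℕ) (z : Z n) (γ : ↥(weightGroup κ)), νt n z γ = (((γ : ℝˣ) : ℝ))⁻¹ * νt n z 1) ∧
  νt 0 default 1 = 1

/-- The map `ν ↦ ν̃` determined by `κ-dim(z)·ν̃(z,γ) = dim(z)·ν(z)·γ⁻¹`. -/
noncomputable def Fmap (κ : ∀ n, Z (n + 1) → Z n → ℝ) (ν : ∀ n, Z n → ℝ) :
    ∀ n, Z n → ↥(weightGroup κ) → ℝ :=
  fun n z γ => (bdim κ z : ℝ) / kdim κ z * ν n z * (((γ : ℝˣ) : ℝ))⁻¹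

/-- The map `ν̃ ↦ ν`, `ν(z) = (κ-dim(z)/dim(z))·ν̃(z,1)`. -/
noncomputable def Gmap (κ : ∀ n, Z (n + 1) → Z n → ℝ)
    (νt : ∀ n, Z n → ↥(weightGroup κ) → ℝ) : ∀ n, Z n → ℝ :=
  fun n z => kdim κ z / (bdim κ z : ℝ) * νt n z 1
section Aux

variable {Z : ℕ → Type u} (κ : ∀ n, Z (n + 1) → Z n → ℝ)

lemma bpath_ext {n : ℕ} {z : Z n} {p q : BPath κ z} (h : p.pt = q.pt) : p = q := by
  cases p; cases q; cases h; rfl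

lemma subsingleton_fin1 [Unique (Z 0)] (k : Fin 1) : Subsingleton (Z (k : ℕ)) := by
  have h : (k : ℕ) = 0 := Nat.lt_one_iff.mp k.isLt
  rw [h]; infer_instance

noncomputable def bpathZero [Unique (Z 0)] (z : Z 0) : BPath κ z where
  pt := fun k => cast (congrArg Z (Nat.lt_one_iff.mp k.isLt).symm) default
  last := @Subsingleton.elim _ (subsingleton_fin1 (Fin.last 0)) _ _
  pos := fun k => k.elim0

noncomputable def bpathUnique [Unique (Z 0)] (z : Z 0) : Unique (BPath κ z) where
  default := bpathZero κ z
  uniq := fun p => bpath_ext κ (funext fun k => @Subsingleton.elim _ (subsingleton_fin1 k) _ _)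

/-- restriction of a path -/
noncomputable def BPath.restrict {n : ℕ} {z : Z (n + 1)} (p : BPath κ z) :
    BPath κ (p.pt (Fin.last n).castSucc) where
  pt := fun k => p.pt k.castSucc
  last := rfl
  pos := fun k => p.pos k.castSucc

lemma bpath_pred_pos {n : ℕ} {z : Z (n + 1)} (p : BPath κ z) :
    0 < κ n z (p.pt (Fin.last n).castSucc) := by
  have h : 0 < κ n (p.pt (Fin.last (n + 1))) (p.pt (Fin.last n).castSucc) :=
    p.pos (Fin.last n)
  rwa [p.last] at h

/-- extension of a path -/
noncomputable def BPath.extend {n : ℕ} {z : Z (n + 1)} {z' : Z n} (h : 0 < κ n z z')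
    (p : BPath κ z') : BPath κ z where
  pt := Fin.lastCases z p.pt
  last := Fin.lastCases_last
  pos := by
    intro k
    induction k using Fin.lastCases with
    | last =>
      show 0 < κ n
        (Fin.lastCases (motive := fun i : Fin (n + 2) => Z i) z p.pt (Fin.last (n + 1)))
        (Fin.lastCases (motive := fun i : Fin (n + 2) => Z i) z p.pt (Fin.last n).castSucc)
      rw [Fin.lastCases_last, Fin.lastCases_castSucc, p.last]
      exact h
    | cast j =>
      show 0 < κ j
        (Fin.lastCases (motive := fun i : Fin (n + 2) => Z i) z p.pt (j.succ).castSucc)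
        (Fin.lastCases (motive := fun i : Fin (n + 2) => Z i) z p.pt (j.castSucc).castSucc)
      rw [Fin.lastCases_castSucc, Fin.lastCases_castSucc]
      exact p.pos j

noncomputable def bpathToSigma {n : ℕ} (z : Z (n + 1)) (p : BPath κ z) :
    Σ z' : {w : Z n // 0 < κ n z w}, BPath κ z'.1 :=
  ⟨⟨p.pt (Fin.last n).castSucc, bpath_pred_pos κ p⟩, p.restrict κ⟩

lemma bpathToSigma_inj {n : ℕ} (z : Z (n + 1)) :
    Function.Injective (bpathToSigma κ z) := by
  intro p q h
  have hpt : (fun k : Fin (n + 1) => p.pt k.castSucc)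
      = (fun k : Fin (n + 1) => q.pt k.castSucc) :=
    congrArg (fun s : Σ z' : {w : Z n // 0 < κ n z w}, BPath κ z'.1 => s.2.pt) h
  apply bpath_ext
  funext k
  induction k using Fin.lastCases with
  | last => rw [p.last, q.last]
  | cast j => exact congrFun hpt j

lemma bpath_finite [Unique (Z 0)]
    (hfin : ∀ (n : ℕ) (z : Z (n + 1)), {z' : Z n | 0 < κ n z z'}.Finite) :
    ∀ (n : ℕ) (z : Z n), Finite (BPath κ z) := by
  intro n
  induction n with
  | zero =>
    intro z
    haveI := bpathUnique κ z
    exact Finite.of_subsingleton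
  | succ n ih =>
    intro z
    haveI : Finite {w : Z n // 0 < κ n z w} := (hfin n z).to_subtype
    haveI : ∀ w : {w : Z n // 0 < κ n z w}, Finite (BPath κ w.1) := fun w => ih w.1
    exact Finite.of_injective _ (bpathToSigma_inj κ z)

lemma exists_pred_pos (hκ01 : ∀ (n : ℕ) (z : Z (n + 1)) (z' : Z n), κ n z z' ∈ Set.Icc (0 : ℝ) 1)
    (hrow : ∀ (n : ℕ) (z : Z (n + 1)), HasSum (fun z' : Z n => κ n z z') 1)
    (n : ℕ) (z : Z (n + 1)) : ∃ z' : Z n, 0 < κ n z z' := by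
  by_contra hc
  push_neg at hc
  have hz : (fun z' : Z n => κ n z z') = fun _ => (0 : ℝ) := by
    funext z'
    exact le_antisymm (hc z') (hκ01 n z z').1
  have h1 := hrow n z
  rw [hz] at h1
  exact one_ne_zero (h1.unique hasSum_zero)

lemma bpath_nonempty [Unique (Z 0)]
    (hκ01 : ∀ (n : ℕ) (z : Z (n + 1)) (z' : Z n), κ n z z' ∈ Set.Icc (0 : ℝ) 1)
    (hrow : ∀ (n : ℕ) (z : Z (n + 1)), HasSum (fun z' : Z n => κ n z z') 1) :
    ∀ (n : ℕ) (z : Z n), Nonempty (BPath κ z) := by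
  intro n
  induction n with
  | zero => intro z; exact ⟨bpathZero κ z⟩
  | succ n ih =>
    intro z
    obtain ⟨z', hz'⟩ := exists_pred_pos κ hκ01 hrow n z
    obtain ⟨p⟩ := ih z'
    exact ⟨p.extend κ hz'⟩

lemma bdim_pos [Unique (Z 0)]
    (hκ01 : ∀ (n : ℕ) (z : Z (n + 1)) (z' : Z n), κ n z z' ∈ Set.Icc (0 : ℝ) 1)
    (hrow : ∀ (n : ℕ) (z : Z (n + 1)), HasSum (fun z' : Z n => κ n z z') 1)
    (hfin : ∀ (n : ℕ) (z : Z (n + 1)), {z' : Z n | 0 < κ n z z'}.Finite)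
    {n : ℕ} (z : Z n) : 0 < (bdim κ z : ℝ) := by
  haveI := bpath_finite κ hfin n z
  haveI := bpath_nonempty κ hκ01 hrow n z
  exact_mod_cast Nat.card_pos

lemma kdim_pos [Unique (Z 0)]
    (hκ01 : ∀ (n : ℕ) (z : Z (n + 1)) (z' : Z n), κ n z z' ∈ Set.Icc (0 : ℝ) 1)
    (hrow : ∀ (n : ℕ) (z : Z (n + 1)), HasSum (fun z' : Z n => κ n z z') 1)
    (hfin : ∀ (n : ℕ) (z : Z (n + 1)), {z' : Z n | 0 < κ n z z'}.Finite)
    {n : ℕ} (z : Z n) : 0 < kdim κ z := by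
  haveI := bpath_finite κ hfin n z
  haveI := Fintype.ofFinite (BPath κ z)
  haveI := bpath_nonempty κ hκ01 hrow n z
  unfold kdim
  apply Real.sqrt_pos.mpr
  rw [tsum_fintype]
  apply Finset.sum_pos
  · intro p _
    exact Finset.prod_pos fun k _ => inv_pos.mpr (p.pos k)
  · exact Finset.univ_nonempty

lemma bdim_zero [Unique (Z 0)] (z : Z 0) : (bdim κ z : ℝ) = 1 := by
  haveI := bpathUnique κ z
  rw [bdim, Nat.card_unique, Nat.cast_one]

lemma kdim_zero [Unique (Z 0)] (z : Z 0) : kdim κ z = 1 := by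
  haveI := bpathUnique κ z
  unfold kdim
  rw [tsum_eq_single (default : BPath κ z)
    (fun b hb => absurd (Subsingleton.elim b default) hb)]
  simp

lemma wrho_pos [Unique (Z 0)]
    (hκ01 : ∀ (n : ℕ) (z : Z (n + 1)) (z' : Z n), κ n z z' ∈ Set.Icc (0 : ℝ) 1)
    (hrow : ∀ (n : ℕ) (z : Z (n + 1)), HasSum (fun z' : Z n => κ n z z') 1)
    (hfin : ∀ (n : ℕ) (z : Z (n + 1)), {z' : Z n | 0 < κ n z z'}.Finite)
    {n : ℕ} {z : Z (n + 1)} {z' : Z n} (h : 0 < κ n z z') : 0 < wrho κ z z' :=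
  div_pos (mul_pos (kdim_pos κ hκ01 hrow hfin z) h) (kdim_pos κ hκ01 hrow hfin z')

lemma wg_pos [Unique (Z 0)]
    (hκ01 : ∀ (n : ℕ) (z : Z (n + 1)) (z' : Z n), κ n z z' ∈ Set.Icc (0 : ℝ) 1)
    (hrow : ∀ (n : ℕ) (z : Z (n + 1)), HasSum (fun z' : Z n => κ n z z') 1)
    (hfin : ∀ (n : ℕ) (z : Z (n + 1)), {z' : Z n | 0 < κ n z z'}.Finite)
    (γ : ↥(weightGroup κ)) : 0 < ((γ : ℝˣ) : ℝ) := by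
  have hle : weightGroup κ ≤ Units.posSubgroup ℝ := by
    rw [weightGroup, Subgroup.closure_le]
    rintro u ⟨n, z, z', hz, hval⟩
    rw [SetLike.mem_coe, Units.mem_posSubgroup, hval]
    exact wrho_pos κ hκ01 hrow hfin hz
  exact (Units.mem_posSubgroup _).mp (hle γ.2)

noncomputable def gmap {n : ℕ} (z' : Z n) (γ' : ↥(weightGroup κ)) (z : Z (n + 1)) :
    ↥(weightGroup κ) :=
  if h : ∃ g : ↥(weightGroup κ), ((g : ℝˣ) : ℝ) = wrho κ z z' then γ' * h.choose⁻¹ else 1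

lemma gmap_eq_of_cond {n : ℕ} {z' : Z n} {γ' : ↥(weightGroup κ)} {z : Z (n + 1)}
    {γ : ↥(weightGroup κ)}
    (hc : (((γ : ℝˣ)⁻¹ * (γ' : ℝˣ) : ℝˣ) : ℝ) = wrho κ z z') : γ = gmap κ z' γ' z := by
  push_cast at hc
  have hex : ∃ g : ↥(weightGroup κ), ((g : ℝˣ) : ℝ) = wrho κ z z' :=
    ⟨γ⁻¹ * γ', by push_cast; exact hc⟩
  have hval : ((hex.choose : ℝˣ) : ℝ) = wrho κ z z' := hex.choose_spec
  have hu : ((γ⁻¹ * γ' : ↥(weightGroup κ)) : ℝˣ) = (hex.choose : ℝˣ) := by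
    apply Units.ext
    push_cast
    rw [hc, hval]
  have h2 : γ⁻¹ * γ' = hex.choose := Subtype.ext hu
  rw [gmap, dif_pos hex, ← h2]
  group

lemma gmap_cond [Unique (Z 0)]
    (hκ01 : ∀ (n : ℕ) (z : Z (n + 1)) (z' : Z n), κ n z z' ∈ Set.Icc (0 : ℝ) 1)
    (hrow : ∀ (n : ℕ) (z : Z (n + 1)), HasSum (fun z' : Z n => κ n z z') 1)
    (hfin : ∀ (n : ℕ) (z : Z (n + 1)), {z' : Z n | 0 < κ n z z'}.Finite)
    {n : ℕ} {z' : Z n} {γ' : ↥(weightGroup κ)} {z : Z (n + 1)} (h : 0 < κ n z z') :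
    ((((gmap κ z' γ' z : ℝˣ))⁻¹ * (γ' : ℝˣ) : ℝˣ) : ℝ) = wrho κ z z' := by
  have hne : wrho κ z z' ≠ 0 := (wrho_pos κ hκ01 hrow hfin h).ne'
  have hmem : Units.mk0 (wrho κ z z') hne ∈ weightGroup κ :=
    Subgroup.subset_closure ⟨n, z, z', h, rfl⟩
  have hex : ∃ g : ↥(weightGroup κ), ((g : ℝˣ) : ℝ) = wrho κ z z' :=
    ⟨⟨Units.mk0 (wrho κ z z') hne, hmem⟩, rfl⟩
  have hval : ((hex.choose : ℝˣ) : ℝ) = wrho κ z z' := hex.choose_spec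
  rw [gmap, dif_pos hex]
  have : ((γ' * hex.choose⁻¹ : ↥(weightGroup κ)) : ℝˣ)⁻¹ * (γ' : ℝˣ)
      = (hex.choose : ℝˣ) := by
    push_cast
    group
  rw [this, hval]

lemma gmap_val [Unique (Z 0)]
    (hκ01 : ∀ (n : ℕ) (z : Z (n + 1)) (z' : Z n), κ n z z' ∈ Set.Icc (0 : ℝ) 1)
    (hrow : ∀ (n : ℕ) (z : Z (n + 1)), HasSum (fun z' : Z n => κ n z z') 1)
    (hfin : ∀ (n : ℕ) (z : Z (n + 1)), {z' : Z n | 0 < κ n z z'}.Finite)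
    {n : ℕ} {z' : Z n} {γ' : ↥(weightGroup κ)} {z : Z (n + 1)} (h : 0 < κ n z z') :
    (((gmap κ z' γ' z : ℝˣ) : ℝ))⁻¹ = wrho κ z z' * (((γ' : ℝˣ) : ℝ))⁻¹ := by
  have hc := gmap_cond κ hκ01 hrow hfin (γ' := γ') h
  have hγ' : ((γ' : ℝˣ) : ℝ) ≠ 0 := Units.ne_zero _
  have hg : ((gmap κ z' γ' z : ℝˣ) : ℝ) ≠ 0 := Units.ne_zero _
  push_cast at hc
  field_simp [← hc]
  rw [← hc, ← mul_assoc, mul_inv_cancel₀ hg, one_mul]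

lemma hasSum_reduce {n : ℕ} (z' : Z n) (γ' : ↥(weightGroup κ))
    (f : Z (n + 1) → ↥(weightGroup κ) → ℝ) (S : ℝ) :
    HasSum (fun p : Z (n + 1) × ↥(weightGroup κ) =>
        f p.1 p.2 * mutilde κ (p.1, (p.2 : ℝˣ)) (z', (γ' : ℝˣ))) S ↔
    HasSum (fun z : Z (n + 1) =>
        f z (gmap κ z' γ' z) * mutilde κ (z, ((gmap κ z' γ' z : ℝˣ))) (z', (γ' : ℝˣ))) S := by
  set e : Z (n + 1) → Z (n + 1) × ↥(weightGroup κ) := fun z => (z, gmap κ z' γ' z) with he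
  have hinj : Function.Injective e := fun a b hab => congrArg Prod.fst hab
  have hvan : ∀ x ∉ Set.range e,
      f x.1 x.2 * mutilde κ (x.1, (x.2 : ℝˣ)) (z', (γ' : ℝˣ)) = 0 := by
    rintro ⟨z, γ⟩ hx
    have hγ : γ ≠ gmap κ z' γ' z := by
      intro hc; exact hx ⟨z, by rw [he]; exact congrArg _ hc.symm⟩
    have hm : mtilde κ (z, (γ : ℝˣ)) (z', (γ' : ℝˣ)) = 0 := by
      rw [mtilde, if_neg]
      rintro ⟨-, h2⟩
      exact hγ (gmap_eq_of_cond κ h2)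
    rw [mutilde, hm]
    simp
  constructor
  · intro H
    exact (Function.Injective.hasSum_iff hinj hvan).mpr H
  · intro H
    exact (Function.Injective.hasSum_iff hinj hvan).mp H

end Aux
theorem stmt10     [∀ n, Countable (Z n)] [Unique (Z 0)]
    (κ : ∀ n, Z (n + 1) → Z n → ℝ)
    (hκ01 : ∀ (n : ℕ) (z : Z (n + 1)) (z' : Z n), κ n z z' ∈ Set.Icc (0 : ℝ) 1)
    (hrow : ∀ (n : ℕ) (z : Z (n + 1)), HasSum (fun z' : Z n => κ n z z') 1)
    (hsupp : ∀ (n : ℕ) (z' : Z n), ∃ z : Z (n + 1), 0 < κ n z z')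
    (hfin : ∀ (n : ℕ) (z : Z (n + 1)), {z' : Z n | 0 < κ n z z'}.Finite) :
    (∀ ν, memH1 κ ν → ∀ (n : ℕ) (z : Z n) (γ : ↥(weightGroup κ)),
        kdim κ z * Fmap κ ν n z γ = (bdim κ z : ℝ) * ν n z * (((γ : ℝˣ) : ℝ))⁻¹) ∧
    (∀ ν, memH1 κ ν → memH1T κ (Fmap κ ν)) ∧
    (∀ νt, memH1T κ νt → memH1 κ (Gmap κ νt)) ∧
    (∀ ν, memH1 κ ν → Gmap κ (Fmap κ ν) = ν) ∧
    (∀ νt, memH1T κ νt → Fmap κ (Gmap κ νt) = νt) ∧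
    (∀ ν₁ ν₂, memH1 κ ν₁ → memH1 κ ν₂ → ∀ t : ℝ, 0 ≤ t → t ≤ 1 →
        Fmap κ (fun n z => t * ν₁ n z + (1 - t) * ν₂ n z) =
          fun n z γ => t * Fmap κ ν₁ n z γ + (1 - t) * Fmap κ ν₂ n z γ) := by
  have hkd : ∀ {m : ℕ} (w : Z m), 0 < kdim κ w := fun w => kdim_pos κ hκ01 hrow hfin w
  have hbd : ∀ {m : ℕ} (w : Z m), 0 < (bdim κ w : ℝ) := fun w => bdim_pos κ hκ01 hrow hfin w
  have hγpos : ∀ γ : ↥(weightGroup κ), 0 < ((γ : ℝˣ) : ℝ) := wg_pos κ hκ01 hrow hfin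
  have hFmap1 : ∀ ν, memH1 κ ν → ∀ (n : ℕ) (z : Z n) (γ : ↥(weightGroup κ)),
      kdim κ z * Fmap κ ν n z γ = (bdim κ z : ℝ) * ν n z * (((γ : ℝˣ) : ℝ))⁻¹ := by
    intro ν _ n z γ
    rw [Fmap]
    have h1 := (hkd z).ne'
    field_simp
  refine ⟨hFmap1, ?_, ?_, ?_, ?_, ?_⟩
  · -- F preserves
    intro ν hν
    refine ⟨?_, ?_, ?_, ?_⟩
    · intro n z γ
      exact mul_nonneg (mul_nonneg (div_nonneg (Nat.cast_nonneg _) (hkd z).le) (hν.1 n z))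
        (inv_nonneg.mpr (hγpos γ).le)
    · intro n z' γ'
      rw [hasSum_reduce]
      have hfun : (fun z : Z (n + 1) =>
          Fmap κ ν (n + 1) z (gmap κ z' γ' z) *
            mutilde κ (z, ((gmap κ z' γ' z : ℝˣ))) (z', (γ' : ℝˣ)))
          = fun z => ν (n + 1) z * κ n z z' *
              ((bdim κ z' : ℝ) / (kdim κ z' * ((γ' : ℝˣ) : ℝ))) := by
        funext z
        by_cases h : 0 < κ n z z'
        · rw [mutilde, mtilde, if_pos ⟨h, gmap_cond κ hκ01 hrow hfin h⟩, Fmap,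
            gmap_val κ hκ01 hrow hfin h, wrho]
          have h1 := (hkd z).ne'
          have h2 := (hkd z').ne'
          have h3 := (hbd z).ne'
          have h4 := (hbd z').ne'
          have h5 := (hγpos γ').ne'
          push_cast
          field_simp
        · have hz : κ n z z' = 0 := le_antisymm (not_lt.mp h) (hκ01 n z z').1
          rw [mutilde, mtilde, if_neg (fun hc => h hc.1), hz]
          simp
      rw [hfun, show Fmap κ ν n z' γ' = ν n z' *
          ((bdim κ z' : ℝ) / (kdim κ z' * ((γ' : ℝˣ) : ℝ))) from by
        rw [Fmap]
        have h2 := (hkd z').ne'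
        have h5 := (hγpos γ').ne'
        field_simp]
      exact (hν.2.2 n z').mul_right _
    · intro n z γ
      rw [Fmap, Fmap]
      push_cast
      ring
    · rw [Fmap, bdim_zero, kdim_zero, hν.2.1]
      push_cast
      norm_num
  · -- G preserves
    intro νt hνt
    refine ⟨?_, ?_, ?_⟩
    · intro n z
      exact mul_nonneg (div_nonneg (hkd z).le (Nat.cast_nonneg _)) (hνt.1 n z 1)
    · rw [Gmap, bdim_zero, kdim_zero, hνt.2.2.2]
      norm_num
    · intro n z'
      have H := (hasSum_reduce κ z' 1 (νt (n + 1)) (νt n z' 1)).mp (hνt.2.1 n z' 1)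
      have H2 := H.mul_right (kdim κ z' / (bdim κ z' : ℝ))
      have hfun : (fun z : Z (n + 1) => Gmap κ νt (n + 1) z * κ n z z')
          = fun z => (νt (n + 1) z (gmap κ z' 1 z) *
              mutilde κ (z, ((gmap κ z' 1 z : ℝˣ))) (z', ((1 : ↥(weightGroup κ)) : ℝˣ))) *
            (kdim κ z' / (bdim κ z' : ℝ)) := by
        funext z
        by_cases h : 0 < κ n z z'
        · rw [mutilde, mtilde, if_pos ⟨h, gmap_cond κ hκ01 hrow hfin h⟩, Gmap,
            hνt.2.2.1 (n + 1) z (gmap κ z' 1 z), gmap_val κ hκ01 hrow hfin h, wrho]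
          have h1 := (hkd z).ne'
          have h2 := (hkd z').ne'
          have h3 := (hbd z).ne'
          have h4 := (hbd z').ne'
          simp only [OneMemClass.coe_one, Units.val_one, inv_one, mul_one, Nat.cast_one]
          push_cast
          field_simp
        · have hz : κ n z z' = 0 := le_antisymm (not_lt.mp h) (hκ01 n z z').1
          rw [mutilde, mtilde, if_neg (fun hc => h hc.1), hz, Gmap]
          simp
      rw [hfun, show Gmap κ νt n z' = νt n z' 1 * (kdim κ z' / (bdim κ z' : ℝ)) from by
        rw [Gmap]; ring]
      exact H2
  · intro ν hν
    funext n z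
    rw [Gmap, Fmap]
    have h1 := (hkd z).ne'
    have h2 := (hbd z).ne'
    simp only [OneMemClass.coe_one, Units.val_one, inv_one, mul_one]
    field_simp
  · intro νt hνt
    funext n z γ
    rw [Fmap, Gmap, hνt.2.2.1 n z γ]
    have h1 := (hkd z).ne'
    have h2 := (hbd z).ne'
    field_simp
  · intro ν₁ ν₂ _ _ t _ _
    funext n z γ
    rw [Fmap, Fmap, Fmap]
    ring
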